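/- arXiv:1707.01426 — 2 statements merged into one kernel-verified Lean document; each statement's English description precedes it below -/
import Mathlib

section
/- (Sufficiency part of Lemma 2.1.) If x0 ≥ y0 = z0 > 0, then there exists a compatible resistance sequence (x_n, y_n, z_n)_{n≥0} of positive triples with initial triple (x0, y0, z0), and it can be chosen so that x_n ≥ y_n = z_n > 0 for every n ≥ 0. -/
/-!
On triples with `y = z` the compatibility relations are homogeneous of degree one, so a
predecessor `(a, b, b)` of `(x, y, y)` is determined by the ratio `t = a / b`, and the relations
reduce to `x / y = (3t² + 6t + 1) / (2(2t + 3))`. This ratio equals `1` at `t = 1` and is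
unbounded, so by the intermediate value theorem every ratio `x / y ≥ 1` is attained by some
`t ≥ 1`. Hence the condition `0 < y ≤ x` propagates, and the sequence is built by repeatedly
choosing predecessors.
-/

noncomputable section

/-- Δ-Y transfer term `φ(x; y, z) = (x+y)(x+z)/(2(x+y+z))`. -/
def phi (x y z : ℝ) : ℝ := (x + y) * (x + z) / (2 * (x + y + z))

/-- A compatible resistance sequence of positive triples. -/
def IsCompat (X Y Z : ℕ → ℝ) : Prop :=
  (∀ n, 0 < X n ∧ 0 < Y n ∧ 0 < Z n) ∧
  ∀ n, X n = X (n + 1) + phi (X (n + 1)) (Y (n + 1)) (Z (n + 1)) ∧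
       Y n = Y (n + 1) + phi (Y (n + 1)) (Z (n + 1)) (X (n + 1)) ∧
       Z n = Z (n + 1) + phi (Z (n + 1)) (X (n + 1)) (Y (n + 1))

open Set

lemma phi_comm (x y z : ℝ) : phi x y z = phi x z y := by
  unfold phi; ring

theorem exists_seq_of_forall_exists_rel {α : Type*} {P : α → Prop} {R : α → α → Prop}
    (h : ∀ a, P a → ∃ b, P b ∧ R a b) {a₀ : α} (h₀ : P a₀) :
    ∃ f : ℕ → α, f 0 = a₀ ∧ ∀ n, P (f n) ∧ R (f n) (f (n + 1)) := by
  choose g hgP hgR using h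
  let F : ℕ → {a // P a} := fun n => Nat.rec ⟨a₀, h₀⟩ (fun _ a => ⟨g a a.2, hgP _ _⟩) n
  exact ⟨fun n => (F n).1, rfl, fun n => ⟨(F n).2, hgR _ _⟩⟩

lemma exists_one_le_ratio_eq {r : ℝ} (hr : 1 ≤ r) :
    ∃ t, 1 ≤ t ∧ 3 * t ^ 2 + 6 * t + 1 = 2 * r * (2 * t + 3) := by
  let f : ℝ → ℝ := fun t => 3 * t ^ 2 + 6 * t + 1 - 2 * r * (2 * t + 3)
  have hf : ContinuousOn f (Icc 1 (2 * r)) := by fun_prop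
  have h0 : (0 : ℝ) ∈ Icc (f 1) (f (2 * r)) := by
    constructor <;> simp only [f] <;> nlinarith
  obtain ⟨t, ht, hft⟩ := intermediate_value_Icc (by linarith) hf h0
  exact ⟨t, ht.1, by simp only [f] at hft; linarith⟩

lemma exists_symmetric_predecessor {x y : ℝ} (hy : 0 < y) (hyx : y ≤ x) :
    ∃ a b : ℝ, 0 < b ∧ b ≤ a ∧ x = a + phi a b b ∧ y = b + phi b b a := by
  obtain ⟨t, ht, hratio⟩ := exists_one_le_ratio_eq ((one_le_div hy).2 hyx)
  have hx : x * (2 * (2 * t + 3)) = y * (3 * t ^ 2 + 6 * t + 1) := by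
    rw [hratio]; field_simp
  have hb : 0 < y * (t + 2) / (2 * t + 3) := by positivity
  -- `b` solves `y = b + φ(b; b, t b) = b (2t + 3) / (t + 2)`
  refine ⟨t * (y * (t + 2) / (2 * t + 3)), y * (t + 2) / (2 * t + 3), hb,
    le_mul_of_one_le_left hb.le ht, ?_, ?_⟩ <;> unfold phi
  · field_simp
    linear_combination (t + 2) * hx
  · field_simp
    ring

theorem stmt1 (x0 y0 z0 : ℝ) (hy : 0 < y0) (heq : y0 = z0) (hle : y0 ≤ x0) :
    ∃ X Y Z : ℕ → ℝ, IsCompat X Y Z ∧ X 0 = x0 ∧ Y 0 = y0 ∧ Z 0 = z0 ∧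
      ∀ n, Y n = Z n ∧ Y n ≤ X n := by
  obtain ⟨f, hf0, hf⟩ := exists_seq_of_forall_exists_rel
    (P := fun p : ℝ × ℝ => 0 < p.2 ∧ p.2 ≤ p.1)
    (R := fun p q => p.1 = q.1 + phi q.1 q.2 q.2 ∧ p.2 = q.2 + phi q.2 q.2 q.1)
    (fun p hp => by
      obtain ⟨a, b, hb, hba, hxa, hyb⟩ := exists_symmetric_predecessor hp.1 hp.2
      exact ⟨(a, b), ⟨hb, hba⟩, hxa, hyb⟩)
    (a₀ := (x0, y0)) ⟨hy, hle⟩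
  refine ⟨fun n => (f n).1, fun n => (f n).2, fun n => (f n).2, ⟨fun n => ?_, fun n => ?_⟩,
    congrArg Prod.fst hf0, congrArg Prod.snd hf0,
    heq ▸ congrArg Prod.snd hf0, fun n => ⟨rfl, (hf n).1.2⟩⟩
  · obtain ⟨⟨hpos, hyx⟩, -⟩ := hf n
    exact ⟨hpos.trans_le hyx, hpos, hpos⟩
  · obtain ⟨-, hxa, hyb⟩ := hf n
    exact ⟨hxa, hyb, by rw [phi_comm]; exact hyb⟩
end
end

section
/- (Claims (i) and (ii) in the proof of Lemma 2.1.) Let (x0, y0, z0) and (x1, y1, z1) be a one-step compatible pair of positive triples. If x0 ≥ y0 > z0, then x1 ≥ y1 > z1 and y1/z1 > y0/z0. -/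
noncomputable section

/-- A one-step compatible pair of positive triples. -/
def OneStep (x0 y0 z0 x1 y1 z1 : ℝ) : Prop :=
  0 < x0 ∧ 0 < y0 ∧ 0 < z0 ∧ 0 < x1 ∧ 0 < y1 ∧ 0 < z1 ∧
  x0 = x1 + phi x1 y1 z1 ∧ y0 = y1 + phi y1 z1 x1 ∧ z0 = z1 + phi z1 x1 y1

/-! With `s = x₁ + y₁ + z₁`, subtracting the defining equations gives
`x₀ - y₀ = (x₁ - y₁)(1 + (x₁ + y₁)/(2s))`, so the order of the coordinates is the same in both
triples, and `y₁ z₀ - z₁ y₀ = (y₁ + z₁) x₁ (y₁ - z₁)/(2s)`, which is positive once `z₁ < y₁`. -/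

section

variable {x y z : ℝ}

theorem add_phi_sub_add_phi (hs : x + y + z ≠ 0) :
    x + phi x y z - (y + phi y z x) = (x - y) * (1 + (x + y) / (2 * (x + y + z))) := by
  unfold phi
  rw [show y + z + x = x + y + z by ring]
  field_simp
  ring

theorem mul_add_phi_sub_mul_add_phi (hs : x + y + z ≠ 0) :
    x * (y + phi y z x) - y * (x + phi x y z) = (x + y) * z * (x - y) / (2 * (x + y + z)) := by
  unfold phi
  rw [show y + z + x = x + y + z by ring]
  field_simp
  ring

theorem one_add_div_pos (hx : 0 < x) (hy : 0 < y) (hz : 0 < z) :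
    0 < 1 + (x + y) / (2 * (x + y + z)) := by
  positivity

theorem add_phi_le_add_phi_iff (hx : 0 < x) (hy : 0 < y) (hz : 0 < z) :
    y + phi y z x ≤ x + phi x y z ↔ y ≤ x := by
  rw [← sub_nonneg, add_phi_sub_add_phi (by positivity),
    mul_nonneg_iff_of_pos_right (one_add_div_pos hx hy hz), sub_nonneg]

theorem add_phi_lt_add_phi_iff (hx : 0 < x) (hy : 0 < y) (hz : 0 < z) :
    y + phi y z x < x + phi x y z ↔ y < x := by
  rw [← sub_pos, add_phi_sub_add_phi (by positivity),
    mul_pos_iff_of_pos_right (one_add_div_pos hx hy hz), sub_pos]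

theorem add_phi_div_add_phi_lt (hy : 0 < y) (hz : 0 < z) (hyx : y < x) :
    (x + phi x y z) / (y + phi y z x) < x / y := by
  have hx : 0 < x := hy.trans hyx
  have hs : 0 < x + y + z := by positivity
  have hy' : 0 < y + phi y z x := by unfold phi; positivity
  rw [div_lt_div_iff₀ hy' hy, ← sub_pos, mul_comm _ y, mul_add_phi_sub_mul_add_phi hs.ne']
  have := sub_pos.2 hyx
  positivity

end

theorem stmt7 (x0 y0 z0 x1 y1 z1 : ℝ) (h : OneStep x0 y0 z0 x1 y1 z1)
    (h1 : y0 ≤ x0) (h2 : z0 < y0) :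
    y1 ≤ x1 ∧ z1 < y1 ∧ y0 / z0 < y1 / z1 := by
  obtain ⟨-, -, -, hx1, hy1, hz1, rfl, rfl, rfl⟩ := h
  have hzy : z1 < y1 := (add_phi_lt_add_phi_iff hy1 hz1 hx1).1 h2
  exact ⟨(add_phi_le_add_phi_iff hx1 hy1 hz1).1 h1, hzy, add_phi_div_add_phi_lt hz1 hx1 hzy⟩
end
end
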